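/- arXiv:1003.2578 — 3 statements merged into one kernel-verified Lean document; each statement's English description precedes it below -/
import Mathlib

section
/- Let H be a finite-dimensional Hopf algebra over a field k, λ : H → k a right cointegral and μ ∈ H a left integral with λ(μ) ≠ 0. Then H is a Frobenius algebra with Frobenius form given by the bilinear map (a, b) ↦ λ(a b). -/
/-!
For `a ∈ H` put `f_a x = λ(a x) • 1` and `p_a x = ∑ λ(a₍₁₎ x) a₍₂₎`. Since `Δ(a x) = Δa Δx`, the
cointegral identity says `f_a = p_a * id` in the convolution algebra `WithConv (H →ₗ H)`, so
`p_a = f_a * S`. The integral property gives `p_a μ = λ(μ) • a`, hence `a` is determined by the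
functional `λ(a ·)`. The map `a ↦ λ(a ·)` is therefore injective, and bijective by dimension count.
-/

open TensorProduct Coalgebra WithConv

section Bialgebra

variable {k H : Type*} [CommSemiring k] [Semiring H]

theorem lid_rTensor_mul [Algebra k H] (f : H →ₗ[k] k) (c : H ⊗[k] H) (w : H) :
    TensorProduct.lid k H (f.rTensor H c) * w =
      TensorProduct.lid k H (f.rTensor H (c * (1 ⊗ₜ w))) := by
  induction c using TensorProduct.induction_on with
  | zero => simp
  | tmul x y => simp [Algebra.TensorProduct.tmul_mul_tmul]
  | add c₁ c₂ h₁ h₂ => simp [add_mul, h₁, h₂]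

variable [Bialgebra k H]

def IsRightCointegral (lam : H →ₗ[k] k) : Prop :=
  ∀ h : H, TensorProduct.lid k H (map lam LinearMap.id (comul (R := k) h)) = lam h • (1 : H)

variable (k) in
def IsLeftIntegral (μ : H) : Prop :=
  ∀ h : H, h * μ = counit (R := k) h • μ

/-- `translateCointegral lam a x = ∑ lam (a₍₁₎ * x) • a₍₂₎`. -/
noncomputable def translateCointegral (lam : H →ₗ[k] k) (a : H) : H →ₗ[k] H :=
  (TensorProduct.lid k H).toLinearMap ∘ₗ lam.rTensor H ∘ₗ LinearMap.mulLeft k (comul a) ∘ₗ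
    (TensorProduct.mk k H H).flip 1

theorem translateCointegral_apply (lam : H →ₗ[k] k) (a x : H) :
    translateCointegral lam a x = TensorProduct.lid k H (lam.rTensor H (comul a * (x ⊗ₜ 1))) :=
  rfl

theorem translateCointegral_convMul_id {lam : H →ₗ[k] k} (hcoint : IsRightCointegral lam)
    (a : H) :
    toConv (translateCointegral lam a) * toConv LinearMap.id =
      toConv (Algebra.linearMap k H ∘ₗ lam ∘ₗ LinearMap.mulLeft k a) := by
  have hmul (c : H ⊗[k] H) :
      LinearMap.mul' k H (map (translateCointegral lam a) LinearMap.id c) =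
        TensorProduct.lid k H (lam.rTensor H (comul a * c)) := by
    induction c using TensorProduct.induction_on with
    | zero => simp
    | tmul x y =>
      rw [map_tmul, LinearMap.mul'_apply, translateCointegral_apply, lid_rTensor_mul, mul_assoc,
        Algebra.TensorProduct.tmul_mul_tmul, mul_one, one_mul, LinearMap.id_apply]
    | add c₁ c₂ h₁ h₂ => simp only [map_add, mul_add, h₁, h₂]
  ext x
  rw [LinearMap.convMul_apply, hmul, ← Bialgebra.comul_mul]
  exact (hcoint (a * x)).trans (Algebra.algebraMap_eq_smul_one _).symm

theorem translateCointegral_apply_of_isLeftIntegral (lam : H →ₗ[k] k) {μ : H}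
    (hint : IsLeftIntegral k μ) (a : H) :
    translateCointegral lam a μ = lam μ • a := by
  have hcontract (c : H ⊗[k] H) :
      TensorProduct.lid k H (lam.rTensor H (c * (μ ⊗ₜ 1))) =
        lam μ • TensorProduct.lid k H (counit.rTensor H c) := by
    induction c using TensorProduct.induction_on with
    | zero => simp
    | tmul x y => simp [Algebra.TensorProduct.tmul_mul_tmul, hint x, mul_smul, smul_comm (lam μ)]
    | add c₁ c₂ h₁ h₂ => simp only [add_mul, map_add, h₁, h₂, smul_add]
  rw [translateCointegral_apply, hcontract, rTensor_counit_comul, lid_tmul, one_smul]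

end Bialgebra

section HopfAlgebra

variable {k H : Type*}

theorem translateCointegral_eq_convMul_antipode [CommSemiring k] [Semiring H] [HopfAlgebra k H]
    {lam : H →ₗ[k] k} (hcoint : IsRightCointegral lam) (a : H) :
    toConv (translateCointegral lam a) =
      toConv (Algebra.linearMap k H ∘ₗ lam ∘ₗ LinearMap.mulLeft k a) *
        toConv (HopfAlgebra.antipode k) := by
  rw [← translateCointegral_convMul_id hcoint, mul_assoc, LinearMap.id_mul_antipode, mul_one]

theorem injective_cointegral_comp_mulLeft [Field k] [Semiring H] [HopfAlgebra k H]
    {lam : H →ₗ[k] k} (hcoint : IsRightCointegral lam) {μ : H} (hint : IsLeftIntegral k μ)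
    (hpair : lam μ ≠ 0) :
    Function.Injective (fun a : H => lam ∘ₗ LinearMap.mulLeft k a) := by
  intro a b hab
  have htranslate : translateCointegral lam a = translateCointegral lam b := by
    apply toConv_injective
    rw [translateCointegral_eq_convMul_antipode hcoint,
      translateCointegral_eq_convMul_antipode hcoint]
    simp only at hab
    rw [hab]
  have hμ := LinearMap.congr_fun htranslate μ
  rw [translateCointegral_apply_of_isLeftIntegral lam hint,
    translateCointegral_apply_of_isLeftIntegral lam hint] at hμ
  exact smul_right_injective H hpair hμ

end HopfAlgebra

theorem hopf_frobenius_general {k H : Type*} [Field k] [Ring H] [HopfAlgebra k H]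
    [FiniteDimensional k H]
    (lam : H →ₗ[k] k)
    (hcoint : ∀ h : H,
      (TensorProduct.lid k H) ((TensorProduct.map lam LinearMap.id) (Coalgebra.comul (R := k) h))
        = lam h • (1 : H))
    (μ : H)
    (hint : ∀ h : H, h * μ = Coalgebra.counit (R := k) h • μ)
    (hpair : lam μ ≠ 0) :
    Function.Bijective (fun a : H => (lam ∘ₗ LinearMap.mulLeft k a : Module.Dual k H)) := by
  have hinj : Function.Injective ((LinearMap.mul k H).compr₂ lam) :=
    injective_cointegral_comp_mulLeft hcoint hint hpair
  exact ⟨hinj, (LinearMap.injective_iff_surjective_of_finrank_eq_finrank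
    Subspace.dual_finrank_eq.symm).mp hinj⟩

/-- A finite-dimensional Hopf algebra with a right cointegral `lam` and a left integral `μ`
with `lam μ ≠ 0` is a Frobenius algebra with Frobenius form `(a, b) ↦ lam (a * b)`:
this form is non-degenerate, i.e. the induced map `H → H*` is bijective. -/
theorem hopf_frobenius {k H : Type*} [Field k] [Ring H] [HopfAlgebra k H]
    [FiniteDimensional k H]
    (lam : H →ₗ[k] k) (hlam : lam ≠ 0)
    (hcoint : ∀ h : H,
      (TensorProduct.lid k H) ((TensorProduct.map lam LinearMap.id) (Coalgebra.comul (R := k) h))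
        = lam h • (1 : H))
    (μ : H) (hμ : μ ≠ 0)
    (hint : ∀ h : H, h * μ = Coalgebra.counit (R := k) h • μ)
    (hpair : lam μ ≠ 0) :
    Function.Bijective (fun a : H => (lam ∘ₗ LinearMap.mulLeft k a : Module.Dual k H)) :=
  hopf_frobenius_general lam hcoint μ hint hpair
end

section
/- (Maschke-type criterion) Let H be a finite-dimensional Hopf algebra over a field k of characteristic zero, with left integral μ ∈ H. Then H is semisimple if and only if ε(μ) ≠ 0. -/
/-!
If `ε μ = 0`, then `μ x μ = ε (μ x) • μ = 0` for every `x`, which a nonzero element of a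
semisimple ring cannot satisfy: the left ideal `H μ` is generated by an idempotent `e = c μ`,
and `e = c (μ c μ) = 0`.

If `ε μ ≠ 0`, Maschke's averaging argument goes through with the integral in place of the sum
over a finite group: a `k`-linear retraction `π` of an inclusion of `H`-modules is turned into
the `H`-linear map `w ↦ ∑ μ₁ • π (S μ₂ • w)`, which is `ε μ` times a retraction. Its
`H`-linearity is the identity `∑ μ₁ ⊗ S μ₂ h = ∑ h μ₁ ⊗ S μ₂` in `H ⊗ H`, obtained by computing
`∑ (h₁ μ)₁ ⊗ S (h₁ μ)₂ h₂` once with `h₁ μ = ε h₁ • μ` and once with coassociativity.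
-/

open Coalgebra HopfAlgebra TensorProduct

theorem IsSemisimpleRing.eq_zero_of_forall_mul_mul_eq_zero {R : Type*} [Ring R]
    [IsSemisimpleRing R] {a : R} (h : ∀ x, a * x * a = 0) : a = 0 := by
  obtain ⟨e, he, hspan⟩ := IsSemisimpleRing.ideal_eq_span_idempotent (Ideal.span {a})
  obtain ⟨c, rfl⟩ := Ideal.mem_span_singleton'.mp (hspan ▸ Ideal.mem_span_singleton_self e)
  obtain ⟨d, hd⟩ := Ideal.mem_span_singleton'.mp (hspan ▸ Ideal.mem_span_singleton_self a)
  rw [← hd, ← he.eq, mul_assoc c, ← mul_assoc a, h, mul_zero, mul_zero]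

theorem Coalgebra.sum_counit_right_smul {k C ι : Type*} [CommSemiring k] [AddCommMonoid C]
    [Module k C] [Coalgebra k C] {a : C} (r : Repr k a ι) :
    ∑ i ∈ r.index, counit (R := k) (r.right i) • r.left i = a := by
  simpa only [map_sum, lift.tmul, LinearMap.flip_apply, LinearMap.lsmul_apply, one_smul]
    using congr(TensorProduct.lift (LinearMap.lsmul k C).flip $(sum_tmul_counit_eq r))

namespace LinearMap

variable {k A V W : Type*} [CommSemiring k] [Semiring A] [Algebra k A]
  [AddCommMonoid V] [Module k V] [Module A V] [IsScalarTower k A V]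
  [AddCommMonoid W] [Module k W] [Module A W] [IsScalarTower k A W]

noncomputable def tensorConjugate (π : W →ₗ[k] V) : A ⊗[k] A →ₗ[k] W →ₗ[k] V :=
  TensorProduct.lift <| LinearMap.mk₂ k
    (fun x y => Algebra.lsmul k k V x ∘ₗ π ∘ₗ Algebra.lsmul k k W y)
    (by intros; simp [add_comp]) (by intros; simp [smul_comp])
    (by intros; simp [comp_add]) (by intros; simp [comp_smul])

@[simp]
theorem tensorConjugate_tmul (π : W →ₗ[k] V) (x y : A) (w : W) :
    π.tensorConjugate (x ⊗ₜ y) w = x • π (y • w) := rfl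

theorem tensorConjugate_mul_one_tmul (π : W →ₗ[k] V) (t : A ⊗[k] A) (y : A) (w : W) :
    π.tensorConjugate (t * (1 ⊗ₜ y)) w = π.tensorConjugate t (y • w) := by
  induction t using TensorProduct.induction_on with
  | zero => simp
  | tmul a b => simp [mul_smul]
  | add s t hs ht => simp only [add_mul, map_add, add_apply, hs, ht]

theorem tensorConjugate_tmul_one_mul (π : W →ₗ[k] V) (t : A ⊗[k] A) (x : A) (w : W) :
    π.tensorConjugate ((x ⊗ₜ 1) * t) w = x • π.tensorConjugate t w := by
  induction t using TensorProduct.induction_on with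
  | zero => simp
  | tmul a b => simp [mul_smul]
  | add s t hs ht => simp only [mul_add, map_add, add_apply, hs, ht, smul_add]

theorem tensorConjugate_apply_of_leftInverse {π : W →ₗ[k] V} {i : V →ₗ[A] W}
    (hπ : ∀ v, π (i v) = v) (t : A ⊗[k] A) (v : V) :
    π.tensorConjugate t (i v) = mul' k A t • v := by
  induction t using TensorProduct.induction_on with
  | zero => simp
  | tmul a b => rw [tensorConjugate_tmul, ← i.map_smul, hπ, mul'_apply, mul_smul]
  | add s t hs ht => simp only [map_add, add_apply, hs, ht, add_smul]

end LinearMap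

namespace HopfAlgebra

section Semiring

variable {k H : Type*} [CommSemiring k] [Semiring H] [HopfAlgebra k H]

variable (k) in
def IsLeftIntegral (ν : H) : Prop :=
  ∀ h : H, h * ν = counit (R := k) h • ν

theorem lTensor_antipode_tmul_mul (x y : H) (t : H ⊗[k] H) :
    (antipode k).lTensor H ((x ⊗ₜ[k] y) * t) =
      (x ⊗ₜ 1) * (antipode k).lTensor H t * (1 ⊗ₜ antipode k y) := by
  induction t using TensorProduct.induction_on with
  | zero => simp
  | tmul a b => simp [antipode_mul_antidistrib]
  | add s t hs ht => simp only [mul_add, add_mul, map_add, hs, ht]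

theorem lTensor_antipode_comul_mul {ι : Type*} {x : H} (r : Repr k x ι) (a : H) :
    (antipode k).lTensor H (comul (x * a)) = ∑ i ∈ r.index,
      (r.left i ⊗ₜ 1) * (antipode k).lTensor H (comul a) * (1 ⊗ₜ antipode k (r.right i)) := by
  simp [Bialgebra.comul_mul, ← r.eq, Finset.sum_mul, lTensor_antipode_tmul_mul]

theorem sum_lTensor_antipode_comul_mul_mul {ι : Type*} {h : H} (r : Repr k h ι) (a : H) :
    ∑ i ∈ r.index, (antipode k).lTensor H (comul (r.left i * a)) * (1 ⊗ₜ r.right i) =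
      (h ⊗ₜ 1) * (antipode k).lTensor H (comul a) := by
  set t := (antipode k).lTensor H (comul (R := k) a)
  let T : H ⊗[k] (H ⊗[k] H) →ₗ[k] H ⊗[k] H :=
    TensorProduct.lift (LinearMap.mk₂ k (fun x u => (x ⊗ₜ 1) * t * (1 ⊗ₜ u))
      (by intros; simp [add_tmul, add_mul]) (by intros; simp [← smul_tmul'])
      (by intros; simp [tmul_add, mul_add]) (by intros; simp [tmul_smul])) ∘ₗ
    (LinearMap.mul' k H ∘ₗ (antipode k).rTensor H).lTensor H
  have coassoc := congrArg T
    (sum_tmul_tmul_eq r (fun i => ℛ k (r.left i)) (fun i => ℛ k (r.right i)))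
  simp only [T, map_sum, LinearMap.comp_apply, LinearMap.lTensor_tmul, LinearMap.rTensor_tmul,
    LinearMap.mul'_apply, lift.tmul, LinearMap.mk₂_apply, ← tmul_sum,
    sum_antipode_mul_eq_algebraMap_counit, ← Algebra.TensorProduct.algebraMap_apply',
    ← Algebra.commutes, ← Algebra.smul_def, ← smul_mul_assoc, smul_tmul'] at coassoc
  rw [← Finset.sum_mul, ← sum_tmul, sum_counit_right_smul] at coassoc
  rw [← coassoc]
  refine Finset.sum_congr rfl fun i _ => ?_
  rw [lTensor_antipode_comul_mul (ℛ k (r.left i)), Finset.sum_mul]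
  refine Finset.sum_congr rfl fun q _ => ?_
  rw [mul_assoc, Algebra.TensorProduct.tmul_mul_tmul, one_mul]

theorem IsLeftIntegral.lTensor_antipode_comul_mul_one_tmul {ν : H} (hν : IsLeftIntegral k ν)
    (h : H) : (antipode k).lTensor H (comul ν) * (1 ⊗ₜ h) =
      (h ⊗ₜ 1) * (antipode k).lTensor H (comul ν) := by
  rw [← sum_lTensor_antipode_comul_mul_mul (ℛ k h) ν]
  simp only [hν _, map_smul, smul_mul_assoc, ← mul_smul_comm, ← Finset.mul_sum, smul_tmul',
    smul_tmul, ← tmul_sum, sum_counit_smul]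

variable {V W : Type*}
  [AddCommMonoid V] [Module k V] [Module H V] [IsScalarTower k H V]
  [AddCommMonoid W] [Module k W] [Module H W] [IsScalarTower k H W]

/-- `w ↦ ∑ ν₁ • π (S ν₂ • w)`. -/
noncomputable def IsLeftIntegral.average {ν : H} (hν : IsLeftIntegral k ν) (π : W →ₗ[k] V) :
    W →ₗ[H] V where
  __ := π.tensorConjugate ((antipode k).lTensor H (comul ν))
  map_smul' h w := by
    simp [← LinearMap.tensorConjugate_mul_one_tmul, hν.lTensor_antipode_comul_mul_one_tmul,
      LinearMap.tensorConjugate_tmul_one_mul]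

theorem IsLeftIntegral.average_apply_of_leftInverse {ν : H} (hν : IsLeftIntegral k ν)
    {π : W →ₗ[k] V} {i : V →ₗ[H] W} (hπ : ∀ v, π (i v) = v) (v : V) :
    hν.average π (i v) = counit (R := k) ν • v := by
  simp [average, LinearMap.tensorConjugate_apply_of_leftInverse hπ]

end Semiring

section Field

variable {k H V W : Type*} [Field k] [Ring H] [HopfAlgebra k H]
  [AddCommGroup V] [Module k V] [Module H V] [IsScalarTower k H V]
  [AddCommGroup W] [Module k W] [Module H W] [IsScalarTower k H W]

theorem IsLeftIntegral.exists_leftInverse_of_injective {ν : H} (hν : IsLeftIntegral k ν)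
    (hεν : counit (R := k) ν ≠ 0) (f : V →ₗ[H] W) (hf : LinearMap.ker f = ⊥) :
    ∃ g : W →ₗ[H] V, g ∘ₗ f = .id := by
  obtain ⟨π, hπ⟩ := (f.restrictScalars k).exists_leftInverse_of_injective (by simpa using hf)
  refine ⟨(counit (R := k) ν)⁻¹ • hν.average π, LinearMap.ext fun v => ?_⟩
  simp [hν.average_apply_of_leftInverse (fun v => congr($hπ v)), smul_smul, inv_mul_cancel₀ hεν]

theorem IsLeftIntegral.isSemisimpleModule {ν : H} (hν : IsLeftIntegral k ν)
    (hεν : counit (R := k) ν ≠ 0) : IsSemisimpleModule H V where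
  exists_isCompl p := by
    obtain ⟨g, hg⟩ := hν.exists_leftInverse_of_injective hεν p.subtype p.ker_subtype
    exact ⟨LinearMap.ker g, LinearMap.isCompl_of_proj (DFunLike.congr_fun hg)⟩

end Field

end HopfAlgebra

theorem hopf_maschke_general {k H : Type*} [Field k] [Ring H] [HopfAlgebra k H]
    (μ : H) (hμ : μ ≠ 0)
    (hint : ∀ h : H, h * μ = Coalgebra.counit (R := k) h • μ) :
    IsSemisimpleRing H ↔ Coalgebra.counit (R := k) μ ≠ 0 := by
  refine ⟨fun _ hε => hμ (IsSemisimpleRing.eq_zero_of_forall_mul_mul_eq_zero fun x => ?_),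
    fun hε => IsLeftIntegral.isSemisimpleModule hint hε⟩
  rw [hint, Bialgebra.counit_mul, hε, zero_mul, zero_smul]

/-- Maschke-type criterion: a finite-dimensional Hopf algebra `H` over a field of
characteristic zero with a nonzero left integral `μ` is semisimple iff `ε μ ≠ 0`. -/
theorem hopf_maschke {k H : Type*} [Field k] [CharZero k] [Ring H] [HopfAlgebra k H]
    [FiniteDimensional k H] (μ : H) (hμ : μ ≠ 0)
    (hint : ∀ h : H, h * μ = Coalgebra.counit (R := k) h • μ) :
    IsSemisimpleRing H ↔ Coalgebra.counit (R := k) μ ≠ 0 :=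
  hopf_maschke_general μ hμ hint
end

section
/- Let H be a finite-dimensional Hopf algebra over a field k. Then its space of left integrals {μ ∈ H : h μ = ε(h) μ for all h} is one-dimensional. -/
/-!
For `f ∈ H*` put `f ⇀ y := ∑ y₁ f (S y₂)` (`dualAct`). It is compatible with left multiplication,
`n (f ⇀ m) = ∑ (f ∘ (· * n₂)) ⇀ (n₁ m)`, so `n (f ⇀ μ) = (f ∘ (· * n)) ⇀ μ` for a left integral
`μ`. Averaging over a basis `bᵢ` with dual basis `bⁱ`, `P x := ∑ (bⁱ ∘ S) ⇀ (bᵢ x)` is a left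
integral, `P (f ⇀ μ) = f 1 • μ` for every integral `μ`, and `x = ∑ bⁱ ⇀ P (bᵢ x)`. Hence
`μ ⊗ f ↦ f ⇀ μ` is an isomorphism `∫ ⊗ H* ≃ H` (a dual form of the fundamental theorem of Hopf
modules), and comparing dimensions gives `dim ∫ = 1`.
-/

open TensorProduct Coalgebra

lemma Module.Basis.sum_apply_coord_comp {ι R M N : Type*} [Fintype ι] [CommSemiring R]
    [AddCommMonoid M] [Module R M] [AddCommMonoid N] [Module R N] (b : Basis ι R M)
    (Φ : M →ₗ[R] Module.Dual R M →ₗ[R] N) (T : M →ₗ[R] M) :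
    ∑ i, Φ (b i) (b.coord i ∘ₗ T) = ∑ i, Φ (T (b i)) (b.coord i) := by
  have hT (i) : b.coord i ∘ₗ T = ∑ m, b.coord i (T (b m)) • b.coord m := by
    simpa using (b.sum_dual_apply_smul_coord (b.coord i ∘ₗ T)).symm
  simp only [hT, map_sum, map_smul]
  rw [Finset.sum_comm]
  refine Finset.sum_congr rfl fun m _ ↦ ?_
  conv_rhs => rw [← b.sum_repr (T (b m))]
  simp only [map_sum, map_smul, LinearMap.sum_apply, LinearMap.smul_apply, Basis.coord_apply]

namespace HopfAlgebra

variable {R A : Type*} [CommSemiring R] [Semiring A] [HopfAlgebra R A]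

variable (R A) in
def leftIntegrals : Submodule R A where
  carrier := {μ : A | ∀ h : A, h * μ = counit (R := R) h • μ}
  add_mem' ha hb h := by simp [mul_add, ha h, hb h, smul_add]
  zero_mem' h := by simp
  smul_mem' c x hx h := by rw [mul_smul_comm, hx h, smul_comm]

lemma mem_leftIntegrals {μ : A} :
    μ ∈ leftIntegrals R A ↔ ∀ h : A, h * μ = counit (R := R) h • μ := Iff.rfl

lemma sum_counit_smul' {ι : Type*} {a : A} (𝓡 : Repr R a ι) :
    ∑ i ∈ 𝓡.index, counit (R := R) (𝓡.right i) • 𝓡.left i = a := by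
  simpa only [map_sum, lift.tmul, LinearMap.flip_apply, LinearMap.lsmul_apply, one_smul]
    using congr(lift (LinearMap.lsmul R A).flip $(sum_tmul_counit_eq 𝓡))

section Collapse

variable {ι κ M : Type*} [AddCommMonoid M] [Module R M] {x : A}

lemma sum_sum_apply_antipode_mul (F : A →ₗ[R] A →ₗ[R] M) (𝓡 : Repr R x ι)
    (𝓡' : ∀ i, Repr R (𝓡.left i) κ) :
    ∑ i ∈ 𝓡.index, ∑ j ∈ (𝓡' i).index,
      F ((𝓡' i).left j) (antipode R ((𝓡' i).right j) * 𝓡.right i) = F x 1 := by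
  have := congr(lift F ((LinearMap.mul' R A ∘ₗ (antipode R).rTensor A).lTensor A
    $(sum_tmul_tmul_eq 𝓡 𝓡' fun i ↦ ℛ R (𝓡.right i))))
  simp only [map_sum, LinearMap.lTensor_tmul, LinearMap.comp_apply, LinearMap.rTensor_tmul,
    LinearMap.mul'_apply, ← tmul_sum, sum_antipode_mul_eq_smul, lift.tmul] at this
  rw [this]
  conv_rhs => rw [← sum_counit_smul' 𝓡]
  simp [map_sum]

lemma sum_sum_apply_mul_antipode (F : A →ₗ[R] A →ₗ[R] M) (𝓡 : Repr R x ι)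
    (𝓡' : ∀ i, Repr R (𝓡.left i) κ) :
    ∑ i ∈ 𝓡.index, ∑ j ∈ (𝓡' i).index,
      F ((𝓡' i).left j) ((𝓡' i).right j * antipode R (𝓡.right i)) = F x 1 := by
  have := congr(lift F ((LinearMap.mul' R A ∘ₗ (antipode R).lTensor A).lTensor A
    $(sum_tmul_tmul_eq 𝓡 𝓡' fun i ↦ ℛ R (𝓡.right i))))
  simp only [map_sum, LinearMap.lTensor_tmul, LinearMap.comp_apply,
    LinearMap.mul'_apply, ← tmul_sum, sum_mul_antipode_eq_smul, lift.tmul] at this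
  rw [this]
  conv_rhs => rw [← sum_counit_smul' 𝓡]
  simp [map_sum]

end Collapse

noncomputable def dualAct : Module.Dual R A →ₗ[R] A →ₗ[R] A :=
  LinearMap.mk₂ R (fun f y ↦ TensorProduct.rid R A ((f ∘ₗ antipode R).lTensor A (comul y)))
    (fun _ _ y ↦ by simp [← (ℛ R y).eq, map_sum, add_smul, Finset.sum_add_distrib])
    (fun _ _ y ↦ by simp [← (ℛ R y).eq, map_sum, Finset.smul_sum, smul_smul])
    (fun _ _ _ ↦ by simp) (fun _ _ _ ↦ by simp)

lemma dualAct_apply {ι : Type*} (f : Module.Dual R A) {y : A} (𝓡 : Repr R y ι) :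
    dualAct f y = ∑ i ∈ 𝓡.index, f (antipode R (𝓡.right i)) • 𝓡.left i := by
  simp [dualAct, ← 𝓡.eq, map_sum]

lemma mul_dualAct {ι : Type*} (f : Module.Dual R A) {n : A} (𝓡 : Repr R n ι) (m : A) :
    n * dualAct f m =
      ∑ i ∈ 𝓡.index, dualAct (f ∘ₗ LinearMap.mulRight R (𝓡.right i)) (𝓡.left i * m) := by
  let 𝓡m := ℛ R m
  let 𝓡' := fun i ↦ ℛ R (𝓡.left i)
  have key (s) : ∑ i ∈ 𝓡.index, ∑ j ∈ (𝓡' i).index,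
      f (antipode R (𝓡m.right s) * (antipode R ((𝓡' i).right j) * 𝓡.right i)) •
        ((𝓡' i).left j * 𝓡m.left s) = f (antipode R (𝓡m.right s)) • (n * 𝓡m.left s) := by
    simpa using sum_sum_apply_antipode_mul (((LinearMap.lsmul R A).flip.compl₂
      (f ∘ₗ LinearMap.mulLeft R (antipode R (𝓡m.right s)))).comp
        (LinearMap.mulRight R (𝓡m.left s))) 𝓡 𝓡'
  simp_rw [dualAct_apply f 𝓡m, Finset.mul_sum, mul_smul_comm, ← key,
    dualAct_apply _ ((𝓡' _).mul 𝓡m)]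
  simp only [Repr.mul_index, Repr.mul_left, Repr.mul_right, Finset.sum_product,
    LinearMap.comp_apply, LinearMap.mulRight_apply, antipode_mul_antidistrib, mul_assoc]
  rw [Finset.sum_comm]
  exact Finset.sum_congr rfl fun i _ ↦ Finset.sum_comm

lemma mul_dualAct_of_mem_leftIntegrals {μ : A} (hμ : μ ∈ leftIntegrals R A)
    (f : Module.Dual R A) (n : A) :
    n * dualAct f μ = dualAct (f ∘ₗ LinearMap.mulRight R n) μ := by
  have hf : ∑ i ∈ (ℛ R n).index,
      counit (R := R) ((ℛ R n).left i) • (f ∘ₗ LinearMap.mulRight R ((ℛ R n).right i)) =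
      f ∘ₗ LinearMap.mulRight R n := by
    ext y
    conv_rhs => rw [← sum_counit_smul (ℛ R n)]
    simp [Finset.mul_sum, map_sum]
  rw [mul_dualAct f (ℛ R n), ← hf, map_sum, LinearMap.sum_apply]
  simp_rw [mem_leftIntegrals.1 hμ, map_smul, LinearMap.smul_apply]

section Basis

variable {ι : Type*} [Fintype ι] (b : Module.Basis ι R A)

noncomputable def integralProj : A →ₗ[R] A :=
  ∑ j, dualAct (b.coord j ∘ₗ antipode R) ∘ₗ LinearMap.mulLeft R (b j)

lemma integralProj_apply (x : A) :
    integralProj b x = ∑ j, dualAct (b.coord j ∘ₗ antipode R) (b j * x) := by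
  simp [integralProj]

lemma integralProj_mem (x : A) : integralProj b x ∈ leftIntegrals R A := by
  refine mem_leftIntegrals.2 fun h ↦ ?_
  let Ψ : A →ₗ[R] A :=
    ∑ j, dualAct (b.coord j ∘ₗ antipode R) ∘ₗ LinearMap.mulRight R (b j * x)
  have hΨ (w : A) : Ψ w = ∑ j, dualAct (b.coord j ∘ₗ antipode R) (w * b j * x) := by
    simp [Ψ, mul_assoc]
  have slide (c w : A) :
      ∑ j, dualAct ((b.coord j ∘ₗ antipode R) ∘ₗ LinearMap.mulRight R c) (w * b j * x) =
        Ψ (w * antipode R c) := by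
    have hS (j) : (b.coord j ∘ₗ antipode R) ∘ₗ LinearMap.mulRight R c =
        (b.coord j ∘ₗ LinearMap.mulLeft R (antipode R c)) ∘ₗ antipode R := by
      ext y; simp [antipode_mul_antidistrib]
    have := b.sum_apply_coord_comp
      (dualAct.compl₁₂ (antipode R).dualMap (LinearMap.mulLeft R w ∘ₗ LinearMap.mulRight R x)).flip
      (LinearMap.mulLeft R (antipode R c))
    simp only [hS, hΨ]
    simpa [mul_assoc, LinearMap.dualMap_apply'] using this
  calc h * integralProj b x
      = ∑ t ∈ (ℛ R h).index, Ψ ((ℛ R h).left t * antipode R ((ℛ R h).right t)) := by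
        simp_rw [integralProj_apply, Finset.mul_sum, mul_dualAct _ (ℛ R h), ← slide]
        rw [Finset.sum_comm]
        simp only [mul_assoc]
    _ = counit (R := R) h • integralProj b x := by
        rw [← map_sum, sum_mul_antipode_eq_smul, map_smul, hΨ, integralProj_apply]
        simp

lemma integralProj_dualAct {μ : A} (hμ : μ ∈ leftIntegrals R A) (f : Module.Dual R A) :
    integralProj b (dualAct f μ) = f 1 • μ := by
  let 𝓡 := ℛ R μ
  let 𝓡' := fun t ↦ ℛ R (𝓡.left t)
  have contract (p q : A) :
      ∑ j, f (antipode R p * b j) * b.repr (antipode R (antipode R q)) j =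
        f (antipode R (antipode R q * p)) := by
    conv_rhs => rw [antipode_mul_antidistrib, ← b.sum_repr (antipode R (antipode R q))]
    simp only [Finset.mul_sum, mul_smul_comm, map_sum, map_smul, smul_eq_mul, mul_comm]
  calc integralProj b (dualAct f μ)
      = ∑ t ∈ 𝓡.index, ∑ u ∈ (𝓡' t).index,
          f (antipode R (antipode R ((𝓡' t).right u) * 𝓡.right t)) • (𝓡' t).left u := by
        simp_rw [integralProj_apply, mul_dualAct_of_mem_leftIntegrals hμ, dualAct_apply _ 𝓡,
          map_sum, map_smul, dualAct_apply _ (𝓡' _), Finset.smul_sum, smul_smul]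
        rw [Finset.sum_comm]
        refine Finset.sum_congr rfl fun t _ ↦ ?_
        rw [Finset.sum_comm]
        simp_rw [← Finset.sum_smul]
        simp [contract]
    _ = f 1 • μ := by
        simpa using sum_sum_apply_antipode_mul
          ((LinearMap.lsmul R A).flip.compl₂ (f ∘ₗ antipode R)) 𝓡 𝓡'

lemma sum_sum_smul_dualAct_dualAct (φ : Module.Dual R A) (y : A) :
    ∑ i, ∑ j, φ (b j * b i) • dualAct (b.coord i) (dualAct (b.coord j ∘ₗ antipode R) y) =
      φ 1 • y := by
  let 𝓡 := ℛ R y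
  let 𝓡' := fun t ↦ ℛ R (𝓡.left t)
  have contract (p q : A) :
      ∑ i, ∑ j, φ (b j * b i) * (b.repr p j * b.repr q i) = φ (p * q) := by
    conv_rhs => rw [← b.sum_repr p, ← b.sum_repr q]
    simp only [Finset.sum_mul_sum, map_sum, smul_mul_smul_comm, map_smul, smul_eq_mul, mul_comm]
    exact Finset.sum_comm
  calc ∑ i, ∑ j, φ (b j * b i) • dualAct (b.coord i) (dualAct (b.coord j ∘ₗ antipode R) y)
      = ∑ t ∈ 𝓡.index, ∑ u ∈ (𝓡' t).index,
          φ (antipode R ((𝓡' t).right u * antipode R (𝓡.right t))) • (𝓡' t).left u := by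
        simp_rw [dualAct_apply _ 𝓡, map_sum, map_smul, dualAct_apply _ (𝓡' _), Finset.smul_sum,
          smul_smul, antipode_mul_antidistrib]
        rw [Finset.sum_congr rfl fun i _ ↦ Finset.sum_comm, Finset.sum_comm]
        refine Finset.sum_congr rfl fun t _ ↦ ?_
        rw [Finset.sum_congr rfl fun i _ ↦ Finset.sum_comm, Finset.sum_comm]
        refine Finset.sum_congr rfl fun u _ ↦ ?_
        simp only [← Finset.sum_smul, LinearMap.comp_apply, Module.Basis.coord_apply, contract]
    _ = φ 1 • y := by
        simpa using sum_sum_apply_mul_antipode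
          ((LinearMap.lsmul R A).flip.compl₂ (φ ∘ₗ antipode R)) 𝓡 𝓡'

lemma sum_dualAct_integralProj (x : A) :
    ∑ i, dualAct (b.coord i) (integralProj b (b i * x)) = x := by
  have expand (i j) : b j * (b i * x) = ∑ m, b.coord m (b j * b i) • (b m * x) := by
    conv_lhs => rw [← mul_assoc, ← b.sum_repr (b j * b i)]
    simp only [Finset.sum_mul, smul_mul_assoc, Module.Basis.coord_apply]
  calc ∑ i, dualAct (b.coord i) (integralProj b (b i * x))
      = ∑ m, ∑ i, ∑ j, b.coord m (b j * b i) •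
          dualAct (b.coord i) (dualAct (b.coord j ∘ₗ antipode R) (b m * x)) := by
        simp_rw [integralProj_apply, expand, map_sum, map_smul]
        rw [Finset.sum_congr rfl fun i _ ↦ Finset.sum_comm, Finset.sum_comm]
    _ = ∑ m, b.coord m 1 • (b m * x) := by simp_rw [sum_sum_smul_dualAct_dualAct]
    _ = x := by
        simp_rw [← smul_mul_assoc, ← Finset.sum_mul, Module.Basis.coord_apply, b.sum_repr, one_mul]

noncomputable def leftIntegralsTensorDualEquiv :
    leftIntegrals R A ⊗[R] Module.Dual R A ≃ₗ[R] A :=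
  .ofLinearMap (TensorProduct.lift (dualAct.flip ∘ₗ (leftIntegrals R A).subtype))
    (∑ i, (TensorProduct.mk R _ _).flip (b.coord i) ∘ₗ
      (integralProj b).codRestrict _ (integralProj_mem b) ∘ₗ LinearMap.mulLeft R (b i))
    (by ext x; simpa using sum_dualAct_integralProj b x)
    (by
      refine TensorProduct.ext' fun ⟨μ, hμ⟩ f ↦ ?_
      have h (i : ι) : integralProj b (b i * dualAct f μ) = f (b i) • μ := by
        simp [mul_dualAct_of_mem_leftIntegrals hμ, integralProj_dualAct b hμ]
      conv_rhs => rw [← b.sum_dual_apply_smul_coord f, tmul_sum]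
      simp_rw [← smul_tmul]
      simp only [LinearMap.comp_apply, lift.tmul, LinearMap.sum_apply, LinearMap.id_apply]
      refine Finset.sum_congr rfl fun i _ ↦ ?_
      exact congr($(Subtype.ext (h i)) ⊗ₜ[R] b.coord i))

end Basis

theorem finrank_leftIntegrals {k H : Type*} [Field k] [Ring H] [HopfAlgebra k H]
    [FiniteDimensional k H] : Module.finrank k (leftIntegrals k H) = 1 := by
  have := Bialgebra.nontrivial k (A := H)
  have h := (leftIntegralsTensorDualEquiv (Module.finBasis k H)).finrank_eq
  rw [Module.finrank_tensorProduct, Subspace.dual_finrank_eq] at h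
  exact Nat.eq_of_mul_eq_mul_right Module.finrank_pos (h.trans (one_mul _).symm)

end HopfAlgebra

/-- The space of left integrals of a finite-dimensional Hopf algebra is one-dimensional. -/
theorem left_integrals_one_dimensional {k H : Type*} [Field k] [Ring H] [HopfAlgebra k H]
    [FiniteDimensional k H] :
    Module.finrank k
      ({ carrier := {μ : H | ∀ h : H, h * μ = Coalgebra.counit (R := k) h • μ}
         add_mem' := by
           intro a b ha hb h
           simp [mul_add, ha h, hb h, smul_add]
         zero_mem' := by intro h; simp
         smul_mem' := by
           intro c x hx h
           rw [mul_smul_comm, hx h, smul_comm] } : Submodule k H) = 1 :=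
  HopfAlgebra.finrank_leftIntegrals
end
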